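/- Fix integers A, a and a positive integer C with 0 ≤ a ≤ 3 such that A/(2C) and a/4 are not both in (1/2)ℤ. Let h be an odd integer and k a positive integer with gcd(h,k) = 1, and suppose that for all integers n ≥ 1 one has nh/k ± (Ah/(Ck) + a/2) ∉ ℤ. Then: (i) for every integer n ≥ 0 the denominators (i^a e^{πiAh/(Ck)}; e^{2πih/k})_{n+1} and (i^{−a} e^{−πiAh/(Ck)} e^{2πih/k}; e^{2πih/k})_{n+1} are nonzero; (ii) (−e^{πih/k}; e^{πih/k})_n = 0 for all n ≥ k; hence the series g₂(i^a e^{πiAh/(Ck)}; e^{πih/k}) terminates and defines a well-defined complex number, equal to the finite sum over 0 ≤ n ≤ k−1. -/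

import Mathlib

noncomputable section

/-- q-Pochhammer symbol `(z;q)_n = ∏_{j=0}^{n-1}(1 - z qʲ)`. -/
def qPoch (z q : ℂ) (n : ℕ) : ℂ := ∏ j ∈ Finset.range n, (1 - z * q^j)

/-- The `n`-th term of the universal mock theta function `g₂`. -/
def g2term (z q : ℂ) (n : ℕ) : ℂ :=
  qPoch (-q) q n * q^(n*(n+1)/2) / (qPoch z q (n+1) * qPoch (z⁻¹ * q) q (n+1))

/-- The universal mock theta function `g₂(z;q)`. -/
def g2 (z q : ℂ) : ℂ := ∑' n : ℕ, g2term z q n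

end

/-! Since `h` is odd, `q = e^{πih/k}` satisfies `q^k = -1`, so the factor `1 + q^k` of `(-q;q)_n`
vanishes for `n ≥ k` and the series for `g₂` stops after `k` terms. Every factor of the two
denominators has the form `1 - e^{πiy}` with `y ≡ nh/k ± (Ah/(Ck) + a/2)` modulo `2ℤ` for some
`n ≥ 1`; such a `y` is not an integer by hypothesis, so the factor is nonzero. -/

open Complex
open scoped Real

theorem qPoch_ne_zero {z q : ℂ} {n : ℕ} (h : ∀ j < n, z * q ^ j ≠ 1) : qPoch z q n ≠ 0 :=
  Finset.prod_ne_zero_iff.2 fun j hj => sub_ne_zero.2 (h j (Finset.mem_range.1 hj)).symm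

theorem qPoch_neg_self_eq_zero {q : ℂ} {k n : ℕ} (hq : q ^ k = -1) (hn : k ≤ n) :
    qPoch (-q) q n = 0 := by
  have hk : k ≠ 0 := by
    rintro rfl
    norm_num at hq
  refine Finset.prod_eq_zero (i := k - 1) (Finset.mem_range.2 (by omega)) ?_
  rw [neg_mul, ← pow_succ', Nat.sub_add_cancel (Nat.one_le_iff_ne_zero.2 hk), hq]
  ring

theorem g2term_eq_zero_of_qPoch_eq_zero {z q : ℂ} {n : ℕ} (h : qPoch (-q) q n = 0) :
    g2term z q n = 0 := by
  rw [g2term, h, zero_mul, zero_div]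

theorem hasSum_g2term_of_qPoch_eq_zero {z q : ℂ} {k : ℕ}
    (h : ∀ n, k ≤ n → qPoch (-q) q n = 0) :
    HasSum (g2term z q) (∑ n ∈ Finset.range k, g2term z q n) :=
  hasSum_sum_of_ne_finset_zero fun n hn =>
    g2term_eq_zero_of_qPoch_eq_zero (h n (not_lt.1 (Finset.mem_range.not.1 hn)))

theorem exp_pi_mul_I_mul_ne_one {y : ℚ} (hy : ∀ m : ℤ, y ≠ m) : exp (π * I * y) ≠ 1 := by
  rw [Ne, exp_eq_one_iff]
  rintro ⟨m, hm⟩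
  refine hy (2 * m) ?_
  have hπI : (π : ℂ) * I ≠ 0 := mul_ne_zero (ofReal_ne_zero.2 Real.pi_ne_zero) I_ne_zero
  have hπIy : (π : ℂ) * I * y = π * I * ((2 * m : ℤ) : ℚ) := by
    rw [hm]
    push_cast
    ring
  exact_mod_cast mul_left_cancel₀ hπI hπIy

theorem qPoch_exp_ne_zero {y s : ℚ} {n : ℕ} (h : ∀ j < n, ∀ m : ℤ, y + j * s ≠ m) :
    qPoch (exp (π * I * y)) (exp (π * I * s)) n ≠ 0 := by
  refine qPoch_ne_zero fun j hj => ?_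
  rw [← exp_nat_mul, ← exp_add]
  convert exp_pi_mul_I_mul_ne_one (h j hj) using 2
  push_cast
  ring

theorem exp_pi_mul_I_div_pow_eq_neg_one {h : ℤ} {k : ℕ} (hodd : Odd h) (hk : k ≠ 0) :
    exp (π * I * h / k) ^ k = -1 := by
  rw [← exp_nat_mul, mul_div_cancel₀ _ (Nat.cast_ne_zero.2 hk), mul_comm, exp_int_mul,
    exp_pi_mul_I, hodd.neg_one_zpow]

theorem I_zpow_eq_exp (a : ℤ) : I ^ a = exp (π * I * (a / 2)) := by
  conv_lhs => rw [← exp_pi_div_two_mul_I, ← exp_int_mul]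
  ring_nf

theorem stmt6 (A a : ℤ) (C : ℕ)
    (h : ℤ) (k : ℕ) (hodd : Odd h) (hk : 0 < k)
    (hyp : ∀ n : ℤ, 1 ≤ n → ∀ m : ℤ,
      ((n*h : ℤ):ℚ)/(k:ℚ) + ((A:ℚ)*(h:ℚ)/((C:ℚ)*(k:ℚ)) + (a:ℚ)/2) ≠ (m:ℚ) ∧
      ((n*h : ℤ):ℚ)/(k:ℚ) - ((A:ℚ)*(h:ℚ)/((C:ℚ)*(k:ℚ)) + (a:ℚ)/2) ≠ (m:ℚ)) :
    (∀ n : ℕ,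
      qPoch (Complex.I^a * Complex.exp (Real.pi * Complex.I * (A:ℂ) * (h:ℂ) / ((C:ℂ) * (k:ℂ))))
        (Complex.exp (2 * Real.pi * Complex.I * (h:ℂ) / (k:ℂ))) (n+1) ≠ 0 ∧
      qPoch (Complex.I^(-a) * Complex.exp (-(Real.pi * Complex.I * (A:ℂ) * (h:ℂ)) / ((C:ℂ) * (k:ℂ)))
          * Complex.exp (2 * Real.pi * Complex.I * (h:ℂ) / (k:ℂ)))
        (Complex.exp (2 * Real.pi * Complex.I * (h:ℂ) / (k:ℂ))) (n+1) ≠ 0) ∧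
    (∀ n : ℕ, k ≤ n →
      qPoch (-Complex.exp (Real.pi * Complex.I * (h:ℂ) / (k:ℂ)))
        (Complex.exp (Real.pi * Complex.I * (h:ℂ) / (k:ℂ))) n = 0) ∧
    Summable (fun n : ℕ => g2term
        (Complex.I^a * Complex.exp (Real.pi * Complex.I * (A:ℂ) * (h:ℂ) / ((C:ℂ) * (k:ℂ))))
        (Complex.exp (Real.pi * Complex.I * (h:ℂ) / (k:ℂ))) n) ∧
    g2 (Complex.I^a * Complex.exp (Real.pi * Complex.I * (A:ℂ) * (h:ℂ) / ((C:ℂ) * (k:ℂ))))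
        (Complex.exp (Real.pi * Complex.I * (h:ℂ) / (k:ℂ)))
      = ∑ n ∈ Finset.range k, g2term
          (Complex.I^a * Complex.exp (Real.pi * Complex.I * (A:ℂ) * (h:ℂ) / ((C:ℂ) * (k:ℂ))))
          (Complex.exp (Real.pi * Complex.I * (h:ℂ) / (k:ℂ))) n := by
  set x : ℚ := A * h / (C * k) + a / 2 with hx
  have hz : I ^ a * exp (π * I * A * h / (C * k)) = exp (π * I * x) := by
    rw [I_zpow_eq_exp, ← exp_add, hx]
    push_cast
    ring_nf
  have hz' : I ^ (-a) * exp (-(π * I * A * h) / (C * k)) * exp (2 * π * I * h / k) =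
      exp (π * I * (2 * h / k - x : ℚ)) := by
    rw [I_zpow_eq_exp, ← exp_add, ← exp_add, hx]
    push_cast
    ring_nf
  have hq : exp (2 * π * I * h / k) = exp (π * I * (2 * h / k : ℚ)) := by
    push_cast
    ring_nf
  have hvanish : ∀ n, k ≤ n → qPoch (-exp (π * I * h / k)) (exp (π * I * h / k)) n = 0 :=
    fun n => qPoch_neg_self_eq_zero (exp_pi_mul_I_div_pow_eq_neg_one hodd hk.ne')
  have hsum :=
    hasSum_g2term_of_qPoch_eq_zero (z := I ^ a * exp (π * I * A * h / (C * k))) hvanish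
  refine ⟨fun n => ⟨?_, ?_⟩, hvanish, hsum.summable, hsum.tsum_eq⟩
  · rw [hz, hq]
    -- `n = 2(j + k)` rather than `2j` keeps `n ≥ 1` at `j = 0`; it only shifts `y` by `2h`.
    refine qPoch_exp_ne_zero fun j _ m hm => (hyp (2 * (j + k)) (by omega) (m + 2 * h)).1 ?_
    push_cast
    rw [← hm]
    field_simp
    ring
  · rw [hz', hq]
    refine qPoch_exp_ne_zero fun j _ m hm => (hyp (2 * (j + 1)) (by omega) m).2 ?_
    push_cast
    rw [← hm]
    field_simp
    ring
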